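/- arXiv:2601.06298 — 2 statements merged into one kernel-verified Lean document; each statement's English description precedes it below -/
import Mathlib

section
/- Let A and B be commuting n×n complex matrices with A Hermitian, A² = I, and B Hermitian, and let t ≥ 0. Then the average over s = ±1 of the conjugations by e^{is√t AB} admits the decomposition: (1/2)Σ_{s=±1} e^{is√t AB} ρ e^{-is√t AB} = Σ_{γ∈{0,1}} A^γ ⟨γ| e^{i√t B⊗Z} (ρ ⊗ |+⟩⟨+|) e^{-i√t B⊗Z} |γ⟩ A^γ, where the inner product ⟨γ|·|γ⟩ denotes the partial contraction over the ancilla qubit against the X-eigenstate |γ⟩ = Z^γ|+⟩. -/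
open Matrix NormedSpace Kronecker

/-- Pauli X matrix. -/
def pauliX : Matrix (Fin 2) (Fin 2) ℂ := !![0, 1; 1, 0]

/-- Pauli Z matrix. -/
def pauliZ : Matrix (Fin 2) (Fin 2) ℂ := !![1, 0; 0, -1]

/-- The `+1` eigenstate of Pauli X, `|+⟩ = (|0⟩+|1⟩)/√2`. -/
noncomputable def ketPlus : Fin 2 → ℂ := fun _ => ((Real.sqrt 2)⁻¹ : ℝ)

/-- `|γ⟩ = Z^γ |+⟩`, the eigenstate of X with eigenvalue `(-1)^γ`. -/
noncomputable def ketGamma (γ : Fin 2) : Fin 2 → ℂ := (pauliZ ^ (γ : ℕ)) *ᵥ ketPlus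

/-- `|+⟩⟨+|` as a matrix. -/
noncomputable def plusProj : Matrix (Fin 2) (Fin 2) ℂ :=
  vecMulVec ketPlus (fun j => star (ketPlus j))

/-- Partial contraction `(id ⊗ ⟨v|) M (id ⊗ |v⟩)` of an operator on `ℂⁿ ⊗ ℂ²`. -/
noncomputable def ancillaContract {n : ℕ} (v : Fin 2 → ℂ)
    (M : Matrix (Fin n × Fin 2) (Fin n × Fin 2) ℂ) : Matrix (Fin n) (Fin n) ℂ :=
  fun i j => ∑ a : Fin 2, ∑ b : Fin 2, star (v a) * M (i, a) (j, b) * v b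

/-!
Since `A² = 1` and `A` commutes with `B`, `(x A B)ᵏ` is `(x B)ᵏ` for even `k` and `A (x B)ᵏ` for
odd `k`, so `exp (x A B) = S + A D` with `S, D = (e^{xB} ± e^{-xB}) / 2`, and `exp (-x A B) = S - A D`.
The average of the two conjugations is therefore `S ρ S - A (D ρ D) A`.
On the ancilla side `B ⊗ Z` is block diagonal with blocks `B, -B`, so its exponential is
`diag (e^{xB}, e^{-xB})`; contracting against `|γ⟩`, whose overlap with `|+⟩` in the `Z` basis is
`(-1)^{γa} / 2`, gives `S ρ S` for `γ = 0` and `-D ρ D` for `γ = 1`.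
-/

section

variable {𝕜 R : Type*} [Field 𝕜] [NeZero (2 : 𝕜)] [Ring R] [Algebra 𝕜 R]

theorem mul_pow_of_sq_eq_one {A M : R} (hA : A ^ 2 = 1) (hAM : Commute A M) (k : ℕ) :
    (A * M) ^ k = (2⁻¹ : 𝕜) • (M ^ k + (-M) ^ k) + A * ((2⁻¹ : 𝕜) • (M ^ k - (-M) ^ k)) := by
  have half : (2⁻¹ : 𝕜) • (M ^ k + M ^ k) = M ^ k := by
    rw [← two_smul 𝕜, smul_smul, inv_mul_cancel₀ two_ne_zero, one_smul]
  rw [hAM.mul_pow]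
  rcases Nat.even_or_odd' k with ⟨j, rfl | rfl⟩
  · rw [(even_two_mul j).neg_pow, sub_self, smul_zero, mul_zero, add_zero, half, pow_mul, hA,
      one_pow, one_mul]
  · rw [(odd_two_mul_add_one j).neg_pow, sub_neg_eq_add, add_neg_cancel, smul_zero, zero_add,
      half, pow_succ, pow_mul, hA, one_pow, one_mul]

theorem Commute.half_smul_conj_add_conj {A D : R} (h : Commute A D) (S ρ : R) :
    (1 / 2 : 𝕜) • ((S + A * D) * ρ * (S - A * D) + (S - A * D) * ρ * (S + A * D)) =
      S * ρ * S + A * (D * ρ * -D) * A := by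
  have hADAD : A * D * ρ * (A * D) = A * (D * ρ * D) * A := by
    rw [congrArg (A * D * ρ * ·) h.eq]
    noncomm_ring
  have expand : (S + A * D) * ρ * (S - A * D) + (S - A * D) * ρ * (S + A * D) =
      (2 : 𝕜) • (S * ρ * S - A * D * ρ * (A * D)) := by
    rw [two_smul]
    noncomm_ring
  rw [expand, hADAD, smul_smul, one_div, inv_mul_cancel₀ two_ne_zero, one_smul, mul_neg, mul_neg,
    neg_mul, sub_eq_add_neg]

end

theorem exp_mul_of_sq_eq_one {𝕂 𝔸 : Type*} [RCLike 𝕂] [NormedRing 𝔸] [NormedAlgebra 𝕂 𝔸]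
    [CompleteSpace 𝔸] {A M : 𝔸} (hA : A ^ 2 = 1) (hAM : Commute A M) :
    exp (A * M) = (2⁻¹ : 𝕂) • (exp M + exp (-M)) + A * ((2⁻¹ : 𝕂) • (exp M - exp (-M))) := by
  have hM := exp_series_hasSum_exp' (𝕂 := 𝕂) M
  have hnegM := exp_series_hasSum_exp' (𝕂 := 𝕂) (-M)
  refine (exp_series_hasSum_exp' (𝕂 := 𝕂) (A * M)).unique ?_
  convert ((hM.add hnegM).const_smul (2⁻¹ : 𝕂)).add
    (((hM.sub hnegM).const_smul (2⁻¹ : 𝕂)).mul_left A) using 1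
  funext k
  simp only [mul_pow_of_sq_eq_one (𝕜 := 𝕂) hA hAM k, mul_sub, mul_smul_comm]
  module

theorem Matrix.exp_mul_of_sq_eq_one {m 𝕂 : Type*} [Fintype m] [DecidableEq m] [RCLike 𝕂]
    {A M : Matrix m m 𝕂} (hA : A ^ 2 = 1) (hAM : Commute A M) :
    exp (A * M) = (2⁻¹ : 𝕂) • (exp M + exp (-M)) + A * ((2⁻¹ : 𝕂) • (exp M - exp (-M))) :=
  open scoped Matrix.Norms.Operator in _root_.exp_mul_of_sq_eq_one hA hAM

theorem kronecker_pauliZ {n : ℕ} (B : Matrix (Fin n) (Fin n) ℂ) :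
    B ⊗ₖ pauliZ = blockDiagonal ![B, -B] := by
  have hZ : pauliZ = diagonal ![1, -1] := by ext i j; fin_cases i <;> fin_cases j <;> rfl
  rw [hZ, kronecker_diagonal]
  congr 1; funext a; fin_cases a <;> simp

theorem exp_smul_kronecker_pauliZ {n : ℕ} (B : Matrix (Fin n) (Fin n) ℂ) (c : ℂ) :
    exp (c • (B ⊗ₖ pauliZ)) = blockDiagonal ![exp (c • B), exp (-c • B)] := by
  have hsmul : c • ![B, -B] = ![c • B, -c • B] := by
    funext a; fin_cases a <;> simp
  rw [kronecker_pauliZ, ← blockDiagonal_smul, hsmul, exp_blockDiagonal]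
  congr 1; funext a
  fin_cases a <;> exact open scoped Matrix.Norms.Operator in Pi.coe_exp _ _

theorem blockDiagonal_mul_kronecker_mul_apply {m o α : Type*} [Fintype m] [Fintype o]
    [DecidableEq o] [CommSemiring α] (E F : o → Matrix m m α) (ρ : Matrix m m α)
    (P : Matrix o o α) (i j : m) (a b : o) :
    (blockDiagonal E * (ρ ⊗ₖ P) * blockDiagonal F) (i, a) (j, b) = P a b * (E a * ρ * F b) i j := by
  simp only [mul_apply, blockDiagonal_apply, kroneckerMap_apply, Fintype.sum_prod_type, ite_mul,
    mul_ite, zero_mul, mul_zero, Finset.sum_ite_eq, Finset.sum_ite_eq', Finset.mem_univ, if_true,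
    Finset.sum_mul, Finset.mul_sum]
  exact Finset.sum_congr rfl fun _ _ => Finset.sum_congr rfl fun _ _ => by ring

theorem ancillaContract_blockDiagonal_mul_kronecker_vecMulVec_mul {n : ℕ} (v w : Fin 2 → ℂ)
    (E F : Fin 2 → Matrix (Fin n) (Fin n) ℂ) (ρ : Matrix (Fin n) (Fin n) ℂ) :
    ancillaContract v
        (blockDiagonal E * (ρ ⊗ₖ vecMulVec w (fun b => star (w b))) * blockDiagonal F) =
      (∑ a, (star (v a) * w a) • E a) * ρ * ∑ b, (star (w b) * v b) • F b := by
  ext i j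
  simp only [ancillaContract, blockDiagonal_mul_kronecker_mul_apply, vecMulVec_apply,
    Fin.sum_univ_two, add_mul, mul_add, smul_mul_assoc, mul_smul_comm, Matrix.add_apply,
    Matrix.smul_apply, smul_eq_mul]
  ring

theorem star_ketPlus_mul_ketPlus (a b : Fin 2) : star (ketPlus a) * ketPlus b = 2⁻¹ := by
  simp only [ketPlus, Complex.star_def, Complex.conj_ofReal, ← Complex.ofReal_mul, ← mul_inv,
    Real.mul_self_sqrt zero_le_two]
  norm_num

theorem ketGamma_apply (γ a : Fin 2) : ketGamma γ a = (-1) ^ ((γ : ℕ) * a) * ketPlus a := by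
  fin_cases γ <;> fin_cases a <;> simp [ketGamma, pauliZ, mulVec, dotProduct, Fin.sum_univ_two]

theorem ancillaContract_ketGamma {n : ℕ} (γ : Fin 2) (E F : Fin 2 → Matrix (Fin n) (Fin n) ℂ)
    (ρ : Matrix (Fin n) (Fin n) ℂ) :
    ancillaContract (ketGamma γ) (blockDiagonal E * (ρ ⊗ₖ plusProj) * blockDiagonal F) =
      ((2⁻¹ : ℂ) • (E 0 + (-1) ^ (γ : ℕ) • E 1)) * ρ *
        ((2⁻¹ : ℂ) • (F 0 + (-1) ^ (γ : ℕ) • F 1)) := by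
  rw [plusProj, ancillaContract_blockDiagonal_mul_kronecker_vecMulVec_mul]
  simp only [ketGamma_apply, star_mul', star_pow, star_neg, star_one, Fin.sum_univ_two, mul_assoc,
    mul_left_comm (star (ketPlus _)), star_ketPlus_mul_ketPlus, Fin.val_zero, Fin.val_one, mul_zero,
    mul_one, pow_zero, one_mul]
  congr 2 <;> module

theorem stmt_5_general {n : ℕ} (A B ρ : Matrix (Fin n) (Fin n) ℂ)
    (hAB : A * B = B * A) (hA2 : A ^ 2 = 1) (t : ℝ) :
    (1/2 : ℂ) • (∑ s : Bool,
        exp (((if s then 1 else -1 : ℂ) * Complex.I * (Real.sqrt t : ℂ)) • (A * B)) * ρ *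
          exp ((-((if s then 1 else -1 : ℂ) * Complex.I * (Real.sqrt t : ℂ))) • (A * B))) =
      ∑ γ : Fin 2, (A ^ (γ : ℕ)) *
        ancillaContract (ketGamma γ)
          (exp ((Complex.I * (Real.sqrt t : ℂ)) • (B ⊗ₖ pauliZ)) * (ρ ⊗ₖ plusProj) *
            exp ((-(Complex.I * (Real.sqrt t : ℂ))) • (B ⊗ₖ pauliZ))) *
        (A ^ (γ : ℕ)) := by
  have hAB' : Commute A B := hAB
  have hexp (x : ℂ) : exp (x • (A * B)) =
      (2⁻¹ : ℂ) • (exp (x • B) + exp (-x • B)) + A * ((2⁻¹ : ℂ) • (exp (x • B) - exp (-x • B))) := by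
    rw [← mul_smul_comm, Matrix.exp_mul_of_sq_eq_one hA2 (hAB'.smul_right x), neg_smul]
  simp only [Fintype.sum_bool, Fin.sum_univ_two, if_true, Bool.false_eq_true, if_false, one_mul,
    neg_mul, neg_neg]
  set c : ℂ := Complex.I * (Real.sqrt t : ℂ)
  set S : Matrix (Fin n) (Fin n) ℂ := (2⁻¹ : ℂ) • (exp (c • B) + exp (-c • B))
  set D : Matrix (Fin n) (Fin n) ℂ := (2⁻¹ : ℂ) • (exp (c • B) - exp (-c • B))
  have hplus : exp (c • (A * B)) = S + A * D := hexp c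
  have hminus : exp (-c • (A * B)) = S - A * D := by
    rw [hexp, neg_neg, add_comm (exp (-c • B)), ← neg_sub (exp (c • B)), smul_neg, mul_neg,
      ← sub_eq_add_neg]
  have hD : Commute A D :=
    ((hAB'.smul_right c).exp_right.sub_right (hAB'.smul_right (-c)).exp_right).smul_right _
  rw [hplus, hminus, exp_smul_kronecker_pauliZ, exp_smul_kronecker_pauliZ, neg_neg,
    ancillaContract_ketGamma, ancillaContract_ketGamma]
  simp only [Matrix.cons_val_zero, Matrix.cons_val_one, Fin.val_zero, Fin.val_one, pow_zero,
    pow_one, one_smul, neg_one_smul, ← sub_eq_add_neg, one_mul, mul_one]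
  rw [add_comm (exp (-c • B)), ← neg_sub (exp (c • B)), smul_neg]
  exact hD.half_smul_conj_add_conj S ρ

theorem stmt_5 {n : ℕ} (A B ρ : Matrix (Fin n) (Fin n) ℂ) (hA : A.IsHermitian)
    (hB : B.IsHermitian) (hAB : A * B = B * A) (hA2 : A ^ 2 = 1) (t : ℝ) (ht : 0 ≤ t) :
    (1/2 : ℂ) • (∑ s : Bool,
        exp (((if s then 1 else -1 : ℂ) * Complex.I * (Real.sqrt t : ℂ)) • (A * B)) * ρ *
          exp ((-((if s then 1 else -1 : ℂ) * Complex.I * (Real.sqrt t : ℂ))) • (A * B))) =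
      ∑ γ : Fin 2, (A ^ (γ : ℕ)) *
        ancillaContract (ketGamma γ)
          (exp ((Complex.I * (Real.sqrt t : ℂ)) • (B ⊗ₖ pauliZ)) * (ρ ⊗ₖ plusProj) *
            exp ((-(Complex.I * (Real.sqrt t : ℂ))) • (B ⊗ₖ pauliZ))) *
        (A ^ (γ : ℕ)) :=
  stmt_5_general A B ρ hAB hA2 t
end

section
/- Let A, B be n×n complex matrices with A Hermitian, A² = I, B Hermitian, and [A,B] = 0, and let ρ_A, ρ_B be density matrices on the respective factors of a bipartite system where A acts on the first factor and B on the second. Define E(ρ) = ½ Σ_{s=±1} e^{is√t A⊗B} ρ e^{-is√t A⊗B}. Then the partial trace over the second factor satisfies Tr_B(E(ρ_A ⊗ ρ_B)) = p₀ ρ_A + p₁ A ρ_A A, where p_γ = Tr(e^{i√t Z⊗B}(|+⟩⟨+| ⊗ ρ_B)e^{-i√t Z⊗B} (|γ⟩⟨γ| ⊗ I)), and moreover p₀, p₁ ≥ 0 and p₀ + p₁ = 1. -/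
open Matrix NormedSpace Kronecker
open scoped ComplexOrder

/-- `|v⟩⟨v|` as a matrix. -/
noncomputable def projOf (v : Fin 2 → ℂ) : Matrix (Fin 2) (Fin 2) ℂ :=
  vecMulVec v (fun j => star (v j))

/-- Partial trace over the second tensor factor. -/
noncomputable def ptraceSnd {n m : ℕ} (M : Matrix (Fin n × Fin m) (Fin n × Fin m) ℂ) :
    Matrix (Fin n) (Fin n) ℂ :=
  fun i j => ∑ a : Fin m, M (i, a) (j, a)

/-!
Since `A² = 1`, `A = P - Q` for the complementary projections `P = (1 + A)/2`, `Q = (1 - A)/2`,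
so `exp (c • A ⊗ B) = P ⊗ exp (c • B) + Q ⊗ exp (-c • B)`. Conjugating `ρ_A ⊗ ρ_B` by it and
tracing out the second factor keeps `PρP + QρQ` and multiplies the coherences `PρQ`, `QρP` by
`Tr (U ρ_B U)` and `Tr (U⁻¹ ρ_B U⁻¹)`, where `U = exp (i √t B)` is unitary; averaging over the
sign of `c` turns both factors into `w = (Tr (U ρ_B U) + Tr (U⁻¹ ρ_B U⁻¹))/2`. Writing
`ρ = (P + Q) ρ (P + Q)` and `AρA = (P - Q) ρ (P - Q)` shows that the channel is
`p₀ ρ + p₁ AρA` with `p₀,₁ = (1 ± w)/2`, and these are `Tr (C ρ_B Cᴴ)` for `C = (U ± U⁻¹)/2`, hence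
nonnegative. The same computation with `A = Z` and `ρ_A = |+⟩⟨+|` gives the trace formula.
-/

section Involution

variable {R : Type*} [Ring R] [Algebra ℂ R]

-- For an involution `M`, these are the projections onto its `±1` eigenspaces.
noncomputable def eigenprojPos (M : R) : R := (1/2 : ℂ) • (1 + M)

noncomputable def eigenprojNeg (M : R) : R := (1/2 : ℂ) • (1 - M)

theorem eigenprojPos_add_eigenprojNeg (M : R) : eigenprojPos M + eigenprojNeg M = 1 := by
  unfold eigenprojPos eigenprojNeg; module

theorem eigenprojPos_sub_eigenprojNeg (M : R) : eigenprojPos M - eigenprojNeg M = M := by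
  unfold eigenprojPos eigenprojNeg; module

variable {M : R}

theorem eigenprojPos_mul_self (hM : M * M = 1) :
    eigenprojPos M * eigenprojPos M = eigenprojPos M := by
  simp only [eigenprojPos, smul_mul_smul, add_mul, mul_add, one_mul, mul_one, hM]; module

theorem eigenprojNeg_mul_self (hM : M * M = 1) :
    eigenprojNeg M * eigenprojNeg M = eigenprojNeg M := by
  simp only [eigenprojNeg, smul_mul_smul, sub_mul, mul_sub, one_mul, mul_one, hM]; module

theorem eigenprojPos_mul_eigenprojNeg (hM : M * M = 1) :
    eigenprojPos M * eigenprojNeg M = 0 := by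
  simp only [eigenprojPos, eigenprojNeg, smul_mul_smul, add_mul, mul_sub, one_mul, mul_one, hM]
  module

theorem eigenprojNeg_mul_eigenprojPos (hM : M * M = 1) :
    eigenprojNeg M * eigenprojPos M = 0 := by
  simp only [eigenprojPos, eigenprojNeg, smul_mul_smul, sub_mul, mul_add, one_mul, mul_one, hM]
  module

theorem smul_add_smul_mul_mul (a b : ℂ) (M ρ : R) :
    a • ρ + b • (M * ρ * M) =
      (a + b) • (eigenprojPos M * ρ * eigenprojPos M + eigenprojNeg M * ρ * eigenprojNeg M) +
      (a - b) • (eigenprojPos M * ρ * eigenprojNeg M + eigenprojNeg M * ρ * eigenprojPos M) := by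
  calc a • ρ + b • (M * ρ * M)
      = a • ((eigenprojPos M + eigenprojNeg M) * ρ * (eigenprojPos M + eigenprojNeg M)) +
        b • ((eigenprojPos M - eigenprojNeg M) * ρ * (eigenprojPos M - eigenprojNeg M)) := by
        rw [eigenprojPos_add_eigenprojNeg, eigenprojPos_sub_eigenprojNeg, one_mul, mul_one]
    _ = _ := by
        simp only [add_mul, mul_add, sub_mul, mul_sub]
        module

end Involution

section KroneckerExp

variable {k m : Type*} [Fintype k] [DecidableEq k] [Fintype m] [DecidableEq m]

noncomputable def kroneckerEigenprojAlgHom (M : Matrix k k ℂ) (hM : M * M = 1) :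
    Matrix m m ℂ × Matrix m m ℂ →ₐ[ℂ] Matrix (k × m) (k × m) ℂ :=
  AlgHom.ofLinearMap
    { toFun := fun XY => eigenprojPos M ⊗ₖ XY.1 + eigenprojNeg M ⊗ₖ XY.2
      map_add' := fun _ _ => by simp only [Prod.fst_add, Prod.snd_add, kronecker_add]; abel
      map_smul' := fun _ _ => by simp [kronecker_smul] }
    (by simp [← add_kronecker, eigenprojPos_add_eigenprojNeg])
    (fun _ _ => by
      simp only [Prod.fst_mul, Prod.snd_mul, LinearMap.coe_mk, AddHom.coe_mk, add_mul, mul_add,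
        ← mul_kronecker_mul, eigenprojPos_mul_self hM, eigenprojNeg_mul_self hM,
        eigenprojPos_mul_eigenprojNeg hM, eigenprojNeg_mul_eigenprojPos hM, zero_kronecker]
      abel)

open scoped Norms.Operator in
theorem exp_eigenprojPos_kronecker_add {M : Matrix k k ℂ} (hM : M * M = 1)
    (X Y : Matrix m m ℂ) :
    exp (eigenprojPos M ⊗ₖ X + eigenprojNeg M ⊗ₖ Y) =
      eigenprojPos M ⊗ₖ exp X + eigenprojNeg M ⊗ₖ exp Y := by
  have h := map_exp (kroneckerEigenprojAlgHom M hM)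
    (LinearMap.continuous_of_finiteDimensional (kroneckerEigenprojAlgHom M hM).toLinearMap)
    (X, Y)
  simp only [kroneckerEigenprojAlgHom, AlgHom.ofLinearMap_apply, LinearMap.coe_mk,
    AddHom.coe_mk, Prod.fst_exp, Prod.snd_exp] at h
  exact h.symm

theorem exp_smul_kronecker_of_mul_self_eq_one {M : Matrix k k ℂ} (hM : M * M = 1) (c : ℂ)
    (B : Matrix m m ℂ) :
    exp (c • (M ⊗ₖ B)) = eigenprojPos M ⊗ₖ exp (c • B) + eigenprojNeg M ⊗ₖ exp ((-c) • B) := by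
  rw [← exp_eigenprojPos_kronecker_add hM]
  congr 1
  conv_lhs => rw [← eigenprojPos_sub_eigenprojNeg M]
  ext
  simp [sub_mul]
  ring

end KroneckerExp

section Unitary

variable {m : Type*} [Fintype m] [DecidableEq m]

theorem conjTranspose_exp_smul {B : Matrix m m ℂ} (hB : B.IsHermitian) {c : ℂ}
    (hc : star c = -c) : (exp (c • B))ᴴ = exp ((-c) • B) := by
  rw [← exp_conjTranspose, conjTranspose_smul, hB.eq, hc]

theorem exp_neg_smul_mul_exp_smul (c : ℂ) (B : Matrix m m ℂ) :
    exp ((-c) • B) * exp (c • B) = 1 := by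
  rw [← Matrix.exp_add_of_commute _ _ (((Commute.refl B).smul_left _).smul_right _),
    neg_smul, neg_add_cancel, exp_zero]

theorem trace_conj_of_mul_eq_one {U V : Matrix m m ℂ} (h : V * U = 1) (σ : Matrix m m ℂ) :
    (U * σ * V).trace = σ.trace := by
  rw [trace_mul_cycle, h, one_mul]

variable {U : Matrix m m ℂ}

theorem trace_half_add_conj (hU : Uᴴ * U = 1) (σ : Matrix m m ℂ) :
    ((1/2 : ℂ) • (U + Uᴴ) * σ * ((1/2 : ℂ) • (U + Uᴴ))ᴴ).trace =
      (σ.trace + ((U * σ * U).trace + (Uᴴ * σ * Uᴴ).trace) / 2) / 2 := by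
  have hhalf : star (1/2 : ℂ) = 1/2 := by simp
  simp only [conjTranspose_smul, conjTranspose_add, conjTranspose_conjTranspose, hhalf,
    Matrix.smul_mul, Matrix.mul_smul, add_mul, mul_add, trace_smul, trace_add, smul_eq_mul]
  rw [trace_conj_of_mul_eq_one hU, trace_conj_of_mul_eq_one (mul_eq_one_comm.mp hU)]
  ring

theorem trace_half_sub_conj (hU : Uᴴ * U = 1) (σ : Matrix m m ℂ) :
    ((1/2 : ℂ) • (U - Uᴴ) * σ * ((1/2 : ℂ) • (U - Uᴴ))ᴴ).trace =
      (σ.trace - ((U * σ * U).trace + (Uᴴ * σ * Uᴴ).trace) / 2) / 2 := by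
  have hhalf : star (1/2 : ℂ) = 1/2 := by simp
  simp only [conjTranspose_smul, conjTranspose_sub, conjTranspose_conjTranspose, hhalf,
    Matrix.smul_mul, Matrix.mul_smul, sub_mul, mul_sub, trace_smul, trace_sub, smul_eq_mul]
  rw [trace_conj_of_mul_eq_one hU, trace_conj_of_mul_eq_one (mul_eq_one_comm.mp hU)]
  ring

end Unitary

theorem Matrix.PosSemidef.exists_nonneg_ofReal_eq_trace {m : Type*} [Fintype m]
    {X : Matrix m m ℂ} (hX : X.PosSemidef) : ∃ r : ℝ, 0 ≤ r ∧ (r : ℂ) = X.trace := by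
  obtain ⟨hre, him⟩ := Complex.nonneg_iff.mp hX.trace_nonneg
  exact ⟨X.trace.re, hre, Complex.ext rfl (by simpa using him)⟩

section PartialTrace

variable {n m : ℕ}

theorem ptraceSnd_add (X Y : Matrix (Fin n × Fin m) (Fin n × Fin m) ℂ) :
    ptraceSnd (X + Y) = ptraceSnd X + ptraceSnd Y := by
  ext i j
  simp [ptraceSnd, Finset.sum_add_distrib]

theorem ptraceSnd_smul (a : ℂ) (X : Matrix (Fin n × Fin m) (Fin n × Fin m) ℂ) :
    ptraceSnd (a • X) = a • ptraceSnd X := by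
  ext i j
  simp [ptraceSnd, Finset.mul_sum]

theorem ptraceSnd_kronecker (X : Matrix (Fin n) (Fin n) ℂ) (Y : Matrix (Fin m) (Fin m) ℂ) :
    ptraceSnd (X ⊗ₖ Y) = Y.trace • X := by
  ext i j
  simp [ptraceSnd, trace, Finset.mul_sum, mul_comm]

theorem trace_mul_kronecker_one (X : Matrix (Fin n × Fin m) (Fin n × Fin m) ℂ)
    (Y : Matrix (Fin n) (Fin n) ℂ) :
    (X * (Y ⊗ₖ (1 : Matrix (Fin m) (Fin m) ℂ))).trace = (ptraceSnd X * Y).trace := by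
  simp only [trace, diag, mul_apply, ptraceSnd, kroneckerMap_apply, one_apply,
    Fintype.sum_prod_type, mul_ite, mul_one, mul_zero, Finset.sum_ite_eq', Finset.mem_univ,
    if_true, Finset.sum_mul]
  exact Finset.sum_congr rfl fun _ _ => Finset.sum_comm

theorem ptraceSnd_exp_smul_kronecker_conj {M : Matrix (Fin n) (Fin n) ℂ} (hM : M * M = 1)
    (B : Matrix (Fin m) (Fin m) ℂ) (c : ℂ) (ρ : Matrix (Fin n) (Fin n) ℂ)
    (σ : Matrix (Fin m) (Fin m) ℂ) :
    ptraceSnd (exp (c • (M ⊗ₖ B)) * (ρ ⊗ₖ σ) * exp ((-c) • (M ⊗ₖ B))) =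
      σ.trace • (eigenprojPos M * ρ * eigenprojPos M + eigenprojNeg M * ρ * eigenprojNeg M) +
      (exp (c • B) * σ * exp (c • B)).trace • (eigenprojPos M * ρ * eigenprojNeg M) +
      (exp ((-c) • B) * σ * exp ((-c) • B)).trace • (eigenprojNeg M * ρ * eigenprojPos M) := by
  have hVU := exp_neg_smul_mul_exp_smul c B
  rw [exp_smul_kronecker_of_mul_self_eq_one hM, exp_smul_kronecker_of_mul_self_eq_one hM,
    neg_neg]
  simp only [add_mul, mul_add, ← mul_kronecker_mul, ptraceSnd_add, ptraceSnd_kronecker]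
  rw [trace_conj_of_mul_eq_one hVU, trace_conj_of_mul_eq_one (mul_eq_one_comm.mp hVU)]
  module

end PartialTrace

section Qubit

theorem pauliZ_mul_self : pauliZ * pauliZ = 1 := by
  ext i j; fin_cases i <;> fin_cases j <;> simp [pauliZ, mul_apply, one_apply]

theorem eigenprojPos_pauliZ : eigenprojPos pauliZ = !![1, 0; 0, 0] := by
  ext i j; fin_cases i <;> fin_cases j <;> norm_num [eigenprojPos, pauliZ]

theorem eigenprojNeg_pauliZ : eigenprojNeg pauliZ = !![0, 0; 0, 1] := by
  ext i j; fin_cases i <;> fin_cases j <;> norm_num [eigenprojNeg, pauliZ]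

theorem projOf_ketGamma (γ : Fin 2) :
    projOf (ketGamma γ) = !![1/2, (-1) ^ (γ : ℕ) / 2; (-1) ^ (γ : ℕ) / 2, 1/2] := by
  have h : (Real.sqrt 2 : ℂ)⁻¹ * (Real.sqrt 2 : ℂ)⁻¹ = 2⁻¹ := by
    rw [← mul_inv, ← Complex.ofReal_mul, Real.mul_self_sqrt zero_le_two]; norm_num
  ext i j
  fin_cases γ <;> fin_cases i <;> fin_cases j <;>
    simp [projOf, ketGamma, ketPlus, pauliZ, vecMulVec_apply, mulVec, dotProduct, h, neg_div]

theorem trace_dephased_ketPlus_mul_projOf_ketGamma (a b : ℂ) (γ : Fin 2) :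
    ((eigenprojPos pauliZ * projOf ketPlus * eigenprojPos pauliZ +
          eigenprojNeg pauliZ * projOf ketPlus * eigenprojNeg pauliZ +
        a • (eigenprojPos pauliZ * projOf ketPlus * eigenprojNeg pauliZ) +
        b • (eigenprojNeg pauliZ * projOf ketPlus * eigenprojPos pauliZ)) *
      projOf (ketGamma γ)).trace = (1 + (-1) ^ (γ : ℕ) * ((a + b) / 2)) / 2 := by
  have hplus : projOf ketPlus = projOf (ketGamma 0) := by simp [ketGamma]
  rw [hplus, projOf_ketGamma, projOf_ketGamma, eigenprojPos_pauliZ, eigenprojNeg_pauliZ]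
  simp [trace_fin_two]
  ring

end Qubit

theorem stmt_6_general {n m : ℕ} (A : Matrix (Fin n) (Fin n) ℂ) (B : Matrix (Fin m) (Fin m) ℂ)
    (hA2 : A ^ 2 = 1) (hB : B.IsHermitian)
    (ρA : Matrix (Fin n) (Fin n) ℂ) (ρB : Matrix (Fin m) (Fin m) ℂ)
    (hρB : ρB.PosSemidef ∧ ρB.trace = 1)
    (t : ℝ) :
    ∃ p : Fin 2 → ℝ, (∀ γ, 0 ≤ p γ) ∧ p 0 + p 1 = 1 ∧
      (∀ γ : Fin 2, (p γ : ℂ) =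
        (exp ((Complex.I * (Real.sqrt t : ℂ)) • (pauliZ ⊗ₖ B)) *
            ((projOf ketPlus) ⊗ₖ ρB) *
            exp ((-(Complex.I * (Real.sqrt t : ℂ))) • (pauliZ ⊗ₖ B)) *
            ((projOf (ketGamma γ)) ⊗ₖ (1 : Matrix (Fin m) (Fin m) ℂ))).trace) ∧
      ptraceSnd ((1/2 : ℂ) • (∑ s : Bool,
          exp (((if s then 1 else -1 : ℂ) * Complex.I * (Real.sqrt t : ℂ)) • (A ⊗ₖ B)) *
            (ρA ⊗ₖ ρB) *
            exp ((-((if s then 1 else -1 : ℂ) * Complex.I * (Real.sqrt t : ℂ))) • (A ⊗ₖ B)))) =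
        (p 0 : ℂ) • ρA + (p 1 : ℂ) • (A * ρA * A) := by
  obtain ⟨hσ, hσtr⟩ := hρB
  have hA2' : A * A = 1 := by rw [← sq, hA2]
  have hc : star (Complex.I * (Real.sqrt t : ℂ)) = -(Complex.I * (Real.sqrt t : ℂ)) := by
    simp
  simp only [Fintype.sum_bool, if_true, if_false, Bool.false_eq_true, one_mul, neg_mul,
    ptraceSnd_smul, ptraceSnd_add, trace_mul_kronecker_one,
    ptraceSnd_exp_smul_kronecker_conj pauliZ_mul_self, ptraceSnd_exp_smul_kronecker_conj hA2',
    hσtr, one_smul, trace_dephased_ketPlus_mul_projOf_ketGamma]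
  simp only [neg_neg]
  generalize Complex.I * (Real.sqrt t : ℂ) = c at hc ⊢
  rw [← conjTranspose_exp_smul hB hc]
  have hU : (exp (c • B))ᴴ * exp (c • B) = 1 :=
    conjTranspose_exp_smul hB hc ▸ exp_neg_smul_mul_exp_smul c B
  generalize exp (c • B) = U at hU ⊢
  set w := ((U * ρB * U).trace + (Uᴴ * ρB * Uᴴ).trace) / 2
  obtain ⟨p0, hp0, hp0w⟩ : ∃ r : ℝ, 0 ≤ r ∧ (r : ℂ) = (1 + w) / 2 := by
    simpa only [trace_half_add_conj hU, hσtr] using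
      (hσ.mul_mul_conjTranspose_same ((1/2 : ℂ) • (U + Uᴴ))).exists_nonneg_ofReal_eq_trace
  obtain ⟨p1, hp1, hp1w⟩ : ∃ r : ℝ, 0 ≤ r ∧ (r : ℂ) = (1 - w) / 2 := by
    simpa only [trace_half_sub_conj hU, hσtr] using
      (hσ.mul_mul_conjTranspose_same ((1/2 : ℂ) • (U - Uᴴ))).exists_nonneg_ofReal_eq_trace
  refine ⟨![p0, p1], Fin.forall_fin_two.mpr ⟨hp0, hp1⟩, ?_,
    Fin.forall_fin_two.mpr ⟨?_, ?_⟩, ?_⟩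
  · exact_mod_cast (show (p0 : ℂ) + p1 = 1 by rw [hp0w, hp1w]; ring)
  · simp [hp0w, w]
  · simp [hp1w, w, sub_eq_add_neg]
  · simp only [Matrix.cons_val_zero, Matrix.cons_val_one, smul_add_smul_mul_mul, hp0w, hp1w]
    module

theorem stmt_6 {n m : ℕ} (A : Matrix (Fin n) (Fin n) ℂ) (B : Matrix (Fin m) (Fin m) ℂ)
    (hA : A.IsHermitian) (hA2 : A ^ 2 = 1) (hB : B.IsHermitian)
    (ρA : Matrix (Fin n) (Fin n) ℂ) (ρB : Matrix (Fin m) (Fin m) ℂ)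
    (hρA : ρA.PosSemidef ∧ ρA.trace = 1) (hρB : ρB.PosSemidef ∧ ρB.trace = 1)
    (t : ℝ) (ht : 0 ≤ t) :
    ∃ p : Fin 2 → ℝ, (∀ γ, 0 ≤ p γ) ∧ p 0 + p 1 = 1 ∧
      (∀ γ : Fin 2, (p γ : ℂ) =
        (exp ((Complex.I * (Real.sqrt t : ℂ)) • (pauliZ ⊗ₖ B)) *
            ((projOf ketPlus) ⊗ₖ ρB) *
            exp ((-(Complex.I * (Real.sqrt t : ℂ))) • (pauliZ ⊗ₖ B)) *
            ((projOf (ketGamma γ)) ⊗ₖ (1 : Matrix (Fin m) (Fin m) ℂ))).trace) ∧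
      ptraceSnd ((1/2 : ℂ) • (∑ s : Bool,
          exp (((if s then 1 else -1 : ℂ) * Complex.I * (Real.sqrt t : ℂ)) • (A ⊗ₖ B)) *
            (ρA ⊗ₖ ρB) *
            exp ((-((if s then 1 else -1 : ℂ) * Complex.I * (Real.sqrt t : ℂ))) • (A ⊗ₖ B)))) =
        (p 0 : ℂ) • ρA + (p 1 : ℂ) • (A * ρA * A) :=
  stmt_6_general A B hA2 hB ρA ρB hρB t
end
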